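/- arXiv:1811.04007 — 4 statements merged into one kernel-verified Lean document; each statement's English description precedes it below -/
import Mathlib

section
/- A functor f : C → D is an equivalence of categories if and only if f is fully faithful and essentially surjective, where essential surjectivity is witnessed by isomorphisms, and moreover in this case any fully faithful functor that is surjective on objects and an equivalence has the right lifting property with respect to all functors that are injective on objects. -/
/-!
On objects the lift is a set-level diagonal: extend the object map of `α` along the injection
`i.obj`, and send the remaining objects of `B` to chosen preimages under the surjection `f.obj`.
On morphisms there is no choice at all: `f` is fully faithful, so each `β.map g` has a unique
preimage, and faithfulness of `f` makes both triangles commute strictly.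
-/

open CategoryTheory

namespace Function

theorem exists_diagonal_of_injective_of_surjective {α β γ δ : Type*}
    {i : α → β} {p : γ → δ} (hi : Injective i) (hp : Surjective p)
    (a : α → γ) (b : β → δ) (h : p ∘ a = b ∘ i) :
    ∃ g : β → γ, g ∘ i = a ∧ p ∘ g = b := by
  refine ⟨extend i a (surjInv hp ∘ b), extend_comp hi _ _, funext fun y => ?_⟩
  rw [comp_apply, apply_extend p]
  by_cases hy : ∃ x, i x = y
  · obtain ⟨x, rfl⟩ := hy
    rw [hi.extend_apply]
    exact congr_fun h x
  · rw [extend_apply' _ _ _ hy]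
    exact surjInv_eq hp (b y)

end Function

namespace CategoryTheory.Functor

variable {A B C D : Type*} [Category A] [Category B] [Category C] [Category D]

theorem ext_of_comp_faithful {F G : B ⥤ C} (f : C ⥤ D) [f.Faithful]
    (hobj : ∀ b, F.obj b = G.obj b) (h : F ⋙ f = G ⋙ f) : F = G := by
  refine Functor.ext hobj fun b b' g => f.map_injective ?_
  simpa [eqToHom_map] using Functor.congr_hom h g

noncomputable def liftOfObj (f : C ⥤ D) [f.Full] [f.Faithful] (β : B ⥤ D) (obj : B → C)
    (hobj : ∀ b, f.obj (obj b) = β.obj b) : B ⥤ C where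
  obj := obj
  map {b b'} g := f.preimage (eqToHom (hobj b) ≫ β.map g ≫ eqToHom (hobj b').symm)
  map_id b := f.map_injective (by simp)
  map_comp g g' := f.map_injective (by simp)

theorem liftOfObj_comp (f : C ⥤ D) [f.Full] [f.Faithful] (β : B ⥤ D) (obj : B → C)
    (hobj : ∀ b, f.obj (obj b) = β.obj b) : liftOfObj f β obj hobj ⋙ f = β :=
  Functor.ext hobj fun b b' g => by simp [liftOfObj]

theorem exists_lift_of_injective_obj_of_surjective_obj (f : C ⥤ D) [f.Full] [f.Faithful]
    (hf : Function.Surjective f.obj) (i : A ⥤ B) (hi : Function.Injective i.obj)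
    (α : A ⥤ C) (β : B ⥤ D) (sq : α ⋙ f = i ⋙ β) :
    ∃ γ : B ⥤ C, i ⋙ γ = α ∧ γ ⋙ f = β := by
  obtain ⟨obj, hobj_i, hobj_f⟩ := Function.exists_diagonal_of_injective_of_surjective hi hf
    α.obj β.obj (funext fun a => Functor.congr_obj sq a)
  have hγ := liftOfObj_comp f β obj (congr_fun hobj_f)
  refine ⟨liftOfObj f β obj _, ext_of_comp_faithful f (congr_fun hobj_i) ?_, hγ⟩
  rw [Functor.assoc, hγ, sq]

end CategoryTheory.Functor

/-- A functor is an equivalence iff it is fully faithful and essentially surjective;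
moreover, an equivalence which is surjective on objects has the right lifting property
with respect to all functors which are injective on objects. -/
theorem stmt4 {C D : Type*} [Category C] [Category D] (f : C ⥤ D) :
    (f.IsEquivalence ↔ (f.Full ∧ f.Faithful ∧ f.EssSurj)) ∧
    (f.IsEquivalence → Function.Surjective f.obj →
      ∀ (A B : Type*) (_ : Category A) (_ : Category B) (i : A ⥤ B),
        Function.Injective i.obj →
        ∀ (α : A ⥤ C) (β : B ⥤ D), α ⋙ f = i ⋙ β →
          ∃ γ : B ⥤ C, i ⋙ γ = α ∧ γ ⋙ f = β) := by
  refine ⟨⟨fun h => ⟨h.full, h.faithful, h.essSurj⟩, fun ⟨_, _, _⟩ => { }⟩, ?_⟩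
  intro _ hf A B _ _ i hi α β sq
  exact Functor.exists_lift_of_injective_obj_of_surjective_obj f hf i hi α β sq
end

section
/- Let f : C → D be an equivalence of categories which is surjective on objects, and let i : A → B be a functor which is injective on objects. Then every commutative square with i on the left and f on the right admits a strict diagonal lift: for functors α : A → C and β : B → D with f ∘ α = β ∘ i, there exists a functor γ : B → C with γ ∘ i = α and f ∘ γ = β. -/
/-!
On objects the lift is built from the set-theoretic lifting property of injections against
surjections: extend `α` along `i` and use a section of `f` off the image of `i`. Since `f` is fully
faithful, the morphisms of `β` then transport uniquely to `C`, and faithfulness of `f` forces the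
upper triangle to commute.
-/

open CategoryTheory

theorem Function.Injective.exists_lift_of_surjective {A B C D : Type*} {i : A → B} {p : C → D}
    (hi : Function.Injective i) (hp : Function.Surjective p) {α : A → C} {β : B → D}
    (hsq : p ∘ α = β ∘ i) : ∃ γ : B → C, γ ∘ i = α ∧ p ∘ γ = β := by
  refine ⟨Function.extend i α (Function.surjInv hp ∘ β), Function.extend_comp hi _ _, ?_⟩
  funext b
  rw [Function.comp_apply, Function.apply_extend p]
  by_cases hb : ∃ a, i a = b
  · obtain ⟨a, rfl⟩ := hb
    rw [hi.extend_apply]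
    exact congrFun hsq a
  · rw [Function.extend_apply' _ _ _ hb]
    exact Function.surjInv_eq hp (β b)

namespace CategoryTheory

theorem Functor.ext_of_comp_eq {A C D : Type*} [Category A] [Category C] [Category D]
    {F G : A ⥤ C} (f : C ⥤ D) [f.Faithful] (hobj : ∀ a, F.obj a = G.obj a)
    (h : F ⋙ f = G ⋙ f) : F = G :=
  Functor.ext hobj fun _ _ g => f.map_injective <| by
    simpa [eqToHom_map] using Functor.congr_hom h g

namespace Functor.FullyFaithful

variable {B C D : Type*} [Category B] [Category C] [Category D] {f : C ⥤ D}

def liftOfObj (hf : f.FullyFaithful) (β : B ⥤ D) (obj : B → C)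
    (h : ∀ b, f.obj (obj b) = β.obj b) : B ⥤ C where
  obj := obj
  map φ := hf.preimage (eqToHom (h _) ≫ β.map φ ≫ eqToHom (h _).symm)
  map_id _ := hf.map_injective (by simp)
  map_comp _ _ := hf.map_injective (by simp)

theorem liftOfObj_comp (hf : f.FullyFaithful) (β : B ⥤ D) (obj : B → C)
    (h : ∀ b, f.obj (obj b) = β.obj b) : hf.liftOfObj β obj h ⋙ f = β :=
  Functor.ext h fun _ _ _ => by simp [liftOfObj]

end Functor.FullyFaithful

end CategoryTheory

/-- An equivalence of categories which is surjective on objects admits strict diagonal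
lifts against functors which are injective on objects. -/
theorem stmt5 {A B C D : Type*} [Category A] [Category B] [Category C] [Category D]
    (f : C ⥤ D) (hf : f.IsEquivalence) (hsurj : Function.Surjective f.obj)
    (i : A ⥤ B) (hi : Function.Injective i.obj)
    (α : A ⥤ C) (β : B ⥤ D) (hsq : α ⋙ f = i ⋙ β) :
    ∃ γ : B ⥤ C, i ⋙ γ = α ∧ γ ⋙ f = β := by
  obtain ⟨obj, hobj_i, hobj_f⟩ := hi.exists_lift_of_surjective hsurj (congrArg (·.obj) hsq)
  let γ := (Functor.FullyFaithful.ofFullyFaithful f).liftOfObj β obj (congrFun hobj_f)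
  have hγ : γ ⋙ f = β := Functor.FullyFaithful.liftOfObj_comp _ _ _ _
  refine ⟨γ, Functor.ext_of_comp_eq f (congrFun hobj_i) ?_, hγ⟩
  rw [Functor.assoc, hγ, hsq]
end

section
/- Let f : C → D be an isofibration of categories (for every object c of C and every isomorphism u : f(c) → d in D there exists an isomorphism v : c → c' in C with f(v) = u), and let i : A → B be a functor which is injective on objects and an equivalence of categories admitting a retraction j : B → A with j ∘ i = id_A and a natural isomorphism u : i ∘ j ≅ id_B satisfying u ∘ i = id. Then every commutative square with i on the left and f on the right admits a strict diagonal lift. -/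
open CategoryTheory

/-- `f` is an isofibration: every isomorphism starting at an object in the image of `f`
lifts to an isomorphism in the source with prescribed domain. -/
def IsIsofibration {C D : Type*} [Category C] [Category D] (f : C ⥤ D) : Prop :=
  ∀ (c : C) (d : D) (u : f.obj c ⟶ d), IsIso u →
    ∃ (c' : C) (v : c ⟶ c') (_ : IsIso v) (h : f.obj c' = d), f.map v ≫ eqToHom h = u

/-!
The square gives a natural isomorphism `(j ⋙ α) ⋙ f = j ⋙ i ⋙ β ≅ β` induced by `u`. Lifting its
components through the isofibration `f` and transporting `j ⋙ α` along the lifts yields a functor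
strictly over `β`. By `hu` the components at objects `i a` are identities, so the lifts there can be
taken trivial, and the new functor still restricts along `i` to `i ⋙ j ⋙ α = α`.
-/

namespace IsIsofibration

variable {B C D : Type*} [Category B] [Category C] [Category D] {f : C ⥤ D}

lemma exists_iso_lift (hf : IsIsofibration f) {c : C} {d : D} (w : f.obj c ≅ d) :
    ∃ (c' : C) (v : c ≅ c') (h : f.obj c' = d), f.map v.hom ≫ eqToHom h = w.hom := by
  obtain ⟨c', v, _, h, hv⟩ := hf c d w.hom inferInstance
  exact ⟨c', asIso v, h, hv⟩

lemma exists_lift_of_iso (hf : IsIsofibration f) {G : B ⥤ C} {H : B ⥤ D}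
    (w : G ⋙ f ≅ H) (S : Set B) (hS : ∀ b ∈ S, ∃ h, w.hom.app b = eqToHom h) :
    ∃ (ℓ : B ⥤ C) (e : G ≅ ℓ), ℓ ⋙ f = H ∧ ∀ b ∈ S, ∃ h, e.hom.app b = eqToHom h := by
  have lift : ∀ b, ∃ (c' : C) (v : G.obj b ≅ c') (h : f.obj c' = H.obj b),
      f.map v.hom ≫ eqToHom h = w.hom.app b ∧ (b ∈ S → ∃ hc, v.hom = eqToHom hc) := by
    intro b
    by_cases hb : b ∈ S
    · obtain ⟨h, hw⟩ := hS b hb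
      exact ⟨G.obj b, Iso.refl _, h, by simp [hw], fun _ => ⟨rfl, rfl⟩⟩
    · obtain ⟨c', v, h, hv⟩ := hf.exists_iso_lift (w.app b)
      exact ⟨c', v, h, hv, fun hb' => absurd hb' hb⟩
  choose L v h hv hvS using lift
  refine ⟨G.copyObj L v, G.isoCopyObj L v, ?_, hvS⟩
  refine Functor.ext_of_iso (Functor.isoWhiskerRight (G.isoCopyObj L v).symm f ≪≫ w) h fun b => ?_
  simp only [Iso.trans_hom, NatTrans.comp_app, Functor.isoWhiskerRight_hom, Iso.symm_hom,
    Functor.whiskerRight_app, Functor.isoCopyObj_inv_app, ← hv b]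
  exact Iso.map_inv_hom_id_assoc (v b) f _

end IsIsofibration

theorem stmt7_general {A B C D : Type*} [Category A] [Category B] [Category C] [Category D]
    (f : C ⥤ D) (hf : IsIsofibration f)
    (i : A ⥤ B)
    (j : B ⥤ A) (hji : i ⋙ j = 𝟭 A)
    (u : j ⋙ i ≅ 𝟭 B)
    (hu : ∀ a : A, u.hom.app (i.obj a) =
      eqToHom (congrArg i.obj (Functor.congr_obj hji a)))
    (α : A ⥤ C) (β : B ⥤ D) (hsq : α ⋙ f = i ⋙ β) :
    ∃ ℓ : B ⥤ C, i ⋙ ℓ = α ∧ ℓ ⋙ f = β := by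
  let w : (j ⋙ α) ⋙ f ≅ β :=
    Functor.isoWhiskerLeft j (eqToIso hsq) ≪≫ Functor.isoWhiskerRight u β ≪≫ β.leftUnitor
  have hw : ∀ b ∈ Set.range i.obj, ∃ h, w.hom.app b = eqToHom h := by
    rintro _ ⟨a, rfl⟩
    have hjia : j.obj (i.obj a) = a := Functor.congr_obj hji a
    exact ⟨(Functor.congr_obj hsq _).trans (congrArg (β.obj ∘ i.obj) hjia),
      by simp [w, hu a, eqToHom_map]⟩
  obtain ⟨ℓ, e, hℓf, he⟩ := hf.exists_lift_of_iso w _ hw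
  choose hobj happ using fun a => he (i.obj a) ⟨a, rfl⟩
  have hα : α = i ⋙ j ⋙ α := by rw [← Functor.assoc, hji, Functor.id_comp]
  have hαℓ : α = i ⋙ ℓ := Functor.ext_of_iso (eqToIso hα ≪≫ Functor.isoWhiskerLeft i e)
    (fun a => (Functor.congr_obj hα a).trans (hobj a)) fun a => by simp [happ a]
  exact ⟨ℓ, hαℓ.symm, hℓf⟩

/-- An isofibration has the strict right lifting property against a trivial cofibration,
i.e. a functor `i` which is injective on objects and admits a retraction `j` with
`i ⋙ j = 𝟭` together with a natural isomorphism `u : j ⋙ i ≅ 𝟭` satisfying `u ∘ i = id`. -/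
theorem stmt7 {A B C D : Type*} [Category A] [Category B] [Category C] [Category D]
    (f : C ⥤ D) (hf : IsIsofibration f)
    (i : A ⥤ B) (hinj : Function.Injective i.obj)
    (j : B ⥤ A) (hji : i ⋙ j = 𝟭 A)
    (u : j ⋙ i ≅ 𝟭 B)
    (hu : ∀ a : A, u.hom.app (i.obj a) =
      eqToHom (congrArg i.obj (Functor.congr_obj hji a)))
    (α : A ⥤ C) (β : B ⥤ D) (hsq : α ⋙ f = i ⋙ β) :
    ∃ ℓ : B ⥤ C, i ⋙ ℓ = α ∧ ℓ ⋙ f = β :=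
  stmt7_general f hf i j hji u hu α β hsq
end

section
/- Pushouts of trivial cofibrations of categories are trivial cofibrations: given a pushout square of categories with left vertical functor i : A → B which is injective on objects and admits a retraction i' with i' ∘ i = id and a natural isomorphism u : i ∘ i' ≅ id satisfying u ∘ i = id, the pushout j : C → D of i along any functor f : A → C is injective on objects and an equivalence of categories admitting a retraction with the analogous properties. -/
open CategoryTheory

universe v u

/-!
The pushout of `i` along `f` has an explicit model `P` (`RetractPushout i' f`): its objects are `C ⊕ B`, an object `b`
of `B` standing for a formal copy of `f (i' b)`, and its morphisms are those of `C` between the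
underlying objects. In `P` the inclusion of `C` is a strong deformation retract with an identity
homotopy. A cocone `(s, t)` descends to `P` by sending `b` to `t b`, which the isomorphism
`t (u b)` connects to `s (f (i' b)) = t (i (i' b))`; the condition `u ∘ i = id` makes this
compatible with the identification of `i a` with `f a`. The universal property of `D` then
exhibits `j` as a retract of `C ⥤ P`, and strong deformation retracts are stable under retracts.
-/

namespace CategoryTheory

def Functor.IsStrongDeformationRetract {C D : Type*} [Category C] [Category D] (j : C ⥤ D) :
    Prop :=
  ∃ (j' : D ⥤ C) (h : j ⋙ j' = 𝟭 C) (v : j' ⋙ j ≅ 𝟭 D),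
    ∀ c : C, v.hom.app (j.obj c) = eqToHom (congrArg j.obj (Functor.congr_obj h c))

namespace Functor.IsStrongDeformationRetract

variable {C D P : Type*} [Category C] [Category D] [Category P] {j : C ⥤ D}

theorem injective_obj (hj : j.IsStrongDeformationRetract) : Function.Injective j.obj := by
  obtain ⟨j', h, -⟩ := hj
  exact Function.LeftInverse.injective (g := j'.obj) (Functor.congr_obj h)

theorem isEquivalence (hj : j.IsStrongDeformationRetract) : j.IsEquivalence := by
  obtain ⟨j', h, v, -⟩ := hj
  exact (Equivalence.mk j j' (eqToIso h.symm) v).isEquivalence_functor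

theorem of_retract {k : C ⥤ P} (hk : k.IsStrongDeformationRetract) (r : D ⥤ P) (s : P ⥤ D)
    (hr : j ⋙ r = k) (hs : k ⋙ s = j) (hrs : r ⋙ s = 𝟭 D) :
    j.IsStrongDeformationRetract := by
  obtain ⟨k', hk', η, hη⟩ := hk
  have hjj' : j ⋙ r ⋙ k' = 𝟭 C := by rw [← Functor.assoc, hr, hk']
  refine ⟨r ⋙ k', hjj',
    eqToIso (by rw [← hs]; rfl) ≪≫ isoWhiskerLeft r (isoWhiskerRight η s) ≪≫ eqToIso hrs,
    fun c => ?_⟩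
  have hrc : r.obj (j.obj c) = k.obj c := Functor.congr_obj hr c
  simp [NatTrans.congr η.hom hrc, hη, eqToHom_map]

end Functor.IsStrongDeformationRetract

theorem Functor.comp_copyObj_eq_of_iso {X P T : Type*} [Category X] [Category P] [Category T]
    {K : X ⥤ P} {F : P ⥤ T} {obj : P → T} {e : ∀ p, F.obj p ≅ obj p} {G : X ⥤ T}
    (α : K ⋙ F ≅ G) (hobj : ∀ x, obj (K.obj x) = G.obj x)
    (hα : ∀ x, α.hom.app x = (e (K.obj x)).hom ≫ eqToHom (hobj x)) :
    K ⋙ F.copyObj obj e = G :=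
  Functor.ext_of_iso (Functor.isoWhiskerLeft K (F.isoCopyObj obj e).symm ≪≫ α) hobj
    fun x => by
      rw [Iso.trans_hom, NatTrans.comp_app, hα]
      exact Iso.inv_hom_id_assoc _ _

theorem InducedCategory.functor_ext {X O D : Type*} [Category X] [Category D] {ρ : O → D}
    {F G : X ⥤ InducedCategory D ρ} (hobj : ∀ x, F.obj x = G.obj x)
    (h : F ⋙ inducedFunctor ρ = G ⋙ inducedFunctor ρ) : F = G := by
  refine Functor.ext hobj fun x y φ => ?_
  ext
  simpa using Functor.congr_hom h φ

variable {A B C : Type*} [Category A] [Category B] [Category C]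

abbrev RetractPushout.vertex (i' : B ⥤ A) (f : A ⥤ C) (x : C ⊕ B) : C :=
  Sum.casesOn x (fun c => c) (fun b => f.obj (i'.obj b))

abbrev RetractPushout (i' : B ⥤ A) (f : A ⥤ C) :=
  InducedCategory C (RetractPushout.vertex i' f)

namespace RetractPushout

variable (i : A ⥤ B) (i' : B ⥤ A) (f : A ⥤ C)

abbrev inl : C ⥤ RetractPushout i' f where
  obj := Sum.inl
  map κ := InducedCategory.homMk κ

theorem isStrongDeformationRetract_inl : (inl i' f).IsStrongDeformationRetract :=
  ⟨inducedFunctor _, rfl, NatIso.ofComponents fun _ => InducedCategory.isoMk (Iso.refl _),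
    fun _ => by ext; simp⟩

-- `i a` is sent to `f a` (as `f (i' (i a))`) rather than to a formal copy, so that the square
-- `i ⋙ inr = f ⋙ inl` commutes strictly.
open Classical in
noncomputable def inrObj (b : B) : RetractPushout i' f :=
  if b ∈ Set.range i.obj then Sum.inl (f.obj (i'.obj b)) else Sum.inr b

lemma vertex_inrObj (b : B) : vertex i' f (inrObj i i' f b) = f.obj (i'.obj b) := by
  unfold inrObj; split <;> rfl

noncomputable def inr : B ⥤ RetractPushout i' f where
  obj := inrObj i i' f
  map {b b'} φ := InducedCategory.homMk
    (eqToHom (vertex_inrObj i i' f b) ≫ f.map (i'.map φ) ≫ eqToHom (vertex_inrObj i i' f b').symm)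

variable {i i' f}

lemma inr_obj_of_mem_range {b : B} (hb : b ∈ Set.range i.obj) :
    (inr i i' f).obj b = Sum.inl (f.obj (i'.obj b)) :=
  if_pos hb

lemma inr_obj_of_notMem_range {b : B} (hb : b ∉ Set.range i.obj) :
    (inr i i' f).obj b = Sum.inr b :=
  if_neg hb

lemma inr_obj_obj (hii' : i ⋙ i' = 𝟭 A) (a : A) :
    (inr i i' f).obj (i.obj a) = Sum.inl (f.obj a) := by
  rw [inr_obj_of_mem_range (Set.mem_range_self a), ← Functor.comp_obj i i', hii',
    Functor.id_obj]

variable (i i' f) in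
lemma inr_comp_inducedFunctor : inr i i' f ⋙ inducedFunctor _ = i' ⋙ f :=
  Functor.ext (vertex_inrObj i i' f) fun _ _ _ => rfl

lemma comp_inr (hii' : i ⋙ i' = 𝟭 A) : i ⋙ inr i i' f = f ⋙ inl i' f :=
  InducedCategory.functor_ext (inr_obj_obj hii') <| by
    rw [Functor.assoc, inr_comp_inducedFunctor, ← Functor.assoc, hii']
    rfl

section Desc

variable {T : Type*} [Category T] (s : C ⥤ T) (t : B ⥤ T) (u : i' ⋙ i ≅ 𝟭 B)
  (hst : i ⋙ t = f ⋙ s)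

abbrev descObj (x : C ⊕ B) : T :=
  Sum.casesOn x s.obj t.obj

def descIso : ∀ x : C ⊕ B, s.obj (vertex i' f x) ≅ descObj s t x
  | .inl _ => Iso.refl _
  | .inr b => eqToIso (Functor.congr_obj hst (i'.obj b)).symm ≪≫ t.mapIso (u.app b)

def desc : RetractPushout i' f ⥤ T :=
  (inducedFunctor _ ⋙ s).copyObj (descObj s t) (descIso s t u hst)

lemma descObj_inr_obj (hst : i ⋙ t = f ⋙ s) (hii' : i ⋙ i' = 𝟭 A) (b : B) :
    descObj s t ((inr i i' f).obj b) = t.obj b := by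
  by_cases hb : b ∈ Set.range i.obj
  · obtain ⟨a, rfl⟩ := hb
    rw [inr_obj_obj hii']
    exact (Functor.congr_obj hst a).symm
  · rw [inr_obj_of_notMem_range hb]

lemma descIso_inr_obj_hom (hii' : i ⋙ i' = 𝟭 A)
    (hu : ∀ a : A, u.hom.app (i.obj a) =
      eqToHom (congrArg i.obj (Functor.congr_obj hii' a))) (b : B) :
    (descIso s t u hst ((inr i i' f).obj b)).hom ≫ eqToHom (descObj_inr_obj s t hst hii' b) =
      eqToHom ((congrArg s.obj (vertex_inrObj i i' f b)).trans
        (Functor.congr_obj hst (i'.obj b)).symm) ≫ t.map (u.hom.app b) := by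
  by_cases hb : b ∈ Set.range i.obj
  · obtain ⟨a, rfl⟩ := hb
    rw [dcongr_arg (fun x => (descIso s t u hst x).hom) (inr_obj_obj hii' a)]
    simp only [descIso, Iso.refl_hom, Category.id_comp, eqToHom_trans, Functor.comp_obj,
      Functor.id_obj, hu, eqToHom_map]
    rfl
  · rw [dcongr_arg (fun x => (descIso s t u hst x).hom) (inr_obj_of_notMem_range hb)]
    simp only [descIso, Functor.comp_obj, Iso.trans_hom, eqToIso.hom, Functor.mapIso_hom,
      Iso.app_hom, Category.assoc, eqToHom_trans_assoc, eqToHom_trans, eqToHom_refl,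
      Category.comp_id, Functor.id_obj]
    rfl

lemma inl_comp_desc : inl i' f ⋙ desc s t u hst = s :=
  Functor.comp_copyObj_eq_of_iso (Iso.refl _) (fun _ => rfl) fun _ => by simp [descIso]

lemma inr_comp_desc (hii' : i ⋙ i' = 𝟭 A)
    (hu : ∀ a : A, u.hom.app (i.obj a) =
      eqToHom (congrArg i.obj (Functor.congr_obj hii' a))) :
    inr i i' f ⋙ desc s t u hst = t :=
  Functor.comp_copyObj_eq_of_iso
    (eqToIso (show inr i i' f ⋙ inducedFunctor _ ⋙ s = (i' ⋙ i) ⋙ t by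
        rw [← Functor.assoc, inr_comp_inducedFunctor, Functor.assoc, ← hst]; rfl) ≪≫
      Functor.isoWhiskerRight u t ≪≫ t.leftUnitor)
    (descObj_inr_obj s t hst hii') fun b => by
      rw [descIso_inr_obj_hom s t u hst hii' hu]
      simp only [Functor.comp_obj, inducedFunctor_obj, Iso.trans_hom, eqToIso.hom,
        Functor.isoWhiskerRight_hom, NatTrans.comp_app, eqToHom_app, Functor.id_obj,
        Functor.whiskerRight_app, Functor.leftUnitor_hom_app, Category.comp_id]
      rfl

end Desc

end RetractPushout

end CategoryTheory

theorem stmt19_general {A B C D : Type u} [Category.{v} A] [Category.{v} B] [Category.{v} C]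
    [Category.{v} D]
    (i : A ⥤ B)
    (i' : B ⥤ A) (hii' : i ⋙ i' = 𝟭 A)
    (u : i' ⋙ i ≅ 𝟭 B)
    (hu : ∀ a : A, u.hom.app (i.obj a) =
      eqToHom (congrArg i.obj (Functor.congr_obj hii' a)))
    (f : A ⥤ C) (j : C ⥤ D) (g : B ⥤ D)
    (hsq : i ⋙ g = f ⋙ j)
    (huniv : ∀ (T : Type u) (_ : Category.{v} T) (s : C ⥤ T) (t : B ⥤ T),
      i ⋙ t = f ⋙ s → ∃! w : D ⥤ T, j ⋙ w = s ∧ g ⋙ w = t) :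
    Function.Injective j.obj ∧ j.IsEquivalence ∧
    ∃ (j' : D ⥤ C) (hjj' : j ⋙ j' = 𝟭 C) (v : j' ⋙ j ≅ 𝟭 D),
      ∀ c : C, v.hom.app (j.obj c) =
        eqToHom (congrArg j.obj (Functor.congr_obj hjj' c)) := by
  open RetractPushout in
  obtain ⟨r, ⟨hjr, hgr⟩, -⟩ :=
    huniv (RetractPushout i' f) inferInstance (inl i' f) (inr i i' f) (comp_inr hii')
  set s := desc j g u hsq
  have hrs : r ⋙ s = 𝟭 D := by
    obtain ⟨_, -, huniq⟩ := huniv D inferInstance j g hsq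
    refine (huniq _ ⟨?_, ?_⟩).trans (huniq _ ⟨j.comp_id, g.comp_id⟩).symm
    · rw [← Functor.assoc, hjr, inl_comp_desc]
    · rw [← Functor.assoc, hgr, inr_comp_desc j g u hsq hii' hu]
  have hj : j.IsStrongDeformationRetract :=
    (isStrongDeformationRetract_inl i' f).of_retract r s hjr (inl_comp_desc j g u hsq) hrs
  exact ⟨hj.injective_obj, hj.isEquivalence, hj⟩

/-- Pushouts of trivial cofibrations of categories are trivial cofibrations: given a
pushout square of categories whose left leg `i : A ⥤ B` is injective on objects and
admits a retraction `i'` with `i ⋙ i' = 𝟭` and a natural isomorphism `u : i' ⋙ i ≅ 𝟭`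
with `u ∘ i = id`, the pushout `j : C ⥤ D` of `i` along `f : A ⥤ C` is injective on
objects and an equivalence of categories admitting a retraction with the analogous
properties. -/
theorem stmt19 {A B C D : Type u} [Category.{v} A] [Category.{v} B] [Category.{v} C]
    [Category.{v} D]
    (i : A ⥤ B) (hinj : Function.Injective i.obj)
    (i' : B ⥤ A) (hii' : i ⋙ i' = 𝟭 A)
    (u : i' ⋙ i ≅ 𝟭 B)
    (hu : ∀ a : A, u.hom.app (i.obj a) =
      eqToHom (congrArg i.obj (Functor.congr_obj hii' a)))
    (f : A ⥤ C) (j : C ⥤ D) (g : B ⥤ D)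
    (hsq : i ⋙ g = f ⋙ j)
    (huniv : ∀ (T : Type u) (_ : Category.{v} T) (s : C ⥤ T) (t : B ⥤ T),
      i ⋙ t = f ⋙ s → ∃! w : D ⥤ T, j ⋙ w = s ∧ g ⋙ w = t) :
    Function.Injective j.obj ∧ j.IsEquivalence ∧
    ∃ (j' : D ⥤ C) (hjj' : j ⋙ j' = 𝟭 C) (v : j' ⋙ j ≅ 𝟭 D),
      ∀ c : C, v.hom.app (j.obj c) =
        eqToHom (congrArg j.obj (Functor.congr_obj hjj' c)) :=
  stmt19_general i i' hii' u hu f j g hsq huniv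
end
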